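/- Let M be the rotation of ℝ² by the angle 2π/3. Let F : ℝ × ℝ² → ℝ be real-analytic in a neighborhood of (λ₀, 0), satisfy F(λ, Mκ) = F(λ, κ), F(λ₀, 0) = 0, ∂F/∂λ(λ₀, 0) = 0, ∂²F/∂λ²(λ₀, 0) ≠ 0, and ∂²F/∂κ₁²(λ₀, 0) = 0. Then there exist δ > 0 and ε > 0 such that every (λ, κ) with F(λ, κ) = 0, |λ − λ₀| < δ, and 0 < ‖κ‖ < δ satisfies |λ − λ₀| ≤ ‖κ‖^{1+ε}. -/

import Mathlib

/-!
Expand `F` in a power series at `(λ₀, 0)` and write points as `(λ₀ + t, κ)`. Invariance under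
`κ ↦ Mκ` passes to each homogeneous term of the series. Since `1 + M + M² = 0`, an `M`-invariant
linear form on `ℝ²` vanishes; hence the linear term is a multiple of `t` (zero, as `∂F/∂λ = 0`)
and the quadratic term has no `t κ` part. An `M`-invariant binary quadratic form satisfies
`q (a κ + b M κ) = (a² - a b + b²) q κ`, so it vanishes once `q e₁ = 0`. Thus
`F (λ₀ + t, κ) = A t² + O(‖(t, κ)‖³)` with `A ≠ 0`. On the zero set, `|t| > ‖κ‖` would give
`|A| ≤ C |t|`, impossible for small `t`; so `|A| t² ≤ C ‖κ‖³`, which yields `t⁴ ≤ ‖κ‖⁵` for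
small `κ`.
-/

/-- Rotation of the Euclidean plane by the angle `2π/3`. -/
noncomputable def rot : EuclideanSpace ℝ (Fin 2) → EuclideanSpace ℝ (Fin 2) :=
  fun x => (WithLp.equiv 2 (Fin 2 → ℝ)).symm
    ![(-1 / 2) * x 0 - (Real.sqrt 3 / 2) * x 1,
      (Real.sqrt 3 / 2) * x 0 - (1 / 2) * x 1]

/-- First coordinate direction in the Euclidean plane. -/
noncomputable def e₁ : ℝ → EuclideanSpace ℝ (Fin 2) :=
  fun t => (WithLp.equiv 2 (Fin 2 → ℝ)).symm ![t, 0]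

open Topology Nat

section PowerSeries

variable {𝕜 E F : Type*} [NontriviallyNormedField 𝕜]
  [NormedAddCommGroup E] [NormedSpace 𝕜 E] [NormedAddCommGroup F] [NormedSpace 𝕜 F]
  {f : E → F} {p q : FormalMultilinearSeries 𝕜 E F} {x : E}

theorem HasFPowerSeriesAt.exists_norm_sub_partialSum_le (hp : HasFPowerSeriesAt f p x) (n : ℕ) :
    ∃ C > 0, ∃ r > 0, ∀ y, ‖y‖ < r → ‖f (x + y) - p.partialSum n y‖ ≤ C * ‖y‖ ^ n := by
  obtain ⟨C, hC, hO⟩ := (hp.isBigO_sub_partialSum_pow n).exists_pos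
  obtain ⟨r, hr, hball⟩ := Metric.eventually_nhds_iff.mp hO.bound
  exact ⟨C, hC, r, hr, fun y hy => by simpa using hball (by simpa using hy)⟩

variable [CompleteSpace F]

theorem HasFPowerSeriesAt.apply_diag_eq [CharZero 𝕜] (hp : HasFPowerSeriesAt f p x)
    (hq : HasFPowerSeriesAt f q x) (n : ℕ) (y : E) :
    p n (fun _ => y) = q n (fun _ => y) := by
  obtain ⟨r, hr⟩ := hp
  obtain ⟨s, hs⟩ := hq
  have h := (hr.factorial_smul y n).trans (hs.factorial_smul y n).symm
  rw [← Nat.cast_smul_eq_nsmul 𝕜, ← Nat.cast_smul_eq_nsmul 𝕜] at h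
  exact smul_right_injective F (cast_ne_zero.mpr (factorial_ne_zero n)) h

theorem HasFPowerSeriesAt.apply_diag_map_eq [CharZero 𝕜] (hp : HasFPowerSeriesAt f p x)
    {u : E →L[𝕜] E} (hux : u x = x) (hf : f ∘ u =ᶠ[𝓝 x] f) (n : ℕ) (y : E) :
    p n (fun _ => u y) = p n (fun _ => y) := by
  have hpu : HasFPowerSeriesAt f p (u x) := by rwa [hux]
  exact (hpu.compContinuousLinearMap.congr hf).apply_diag_eq hp n y

theorem HasFPowerSeriesAt.iteratedDeriv_comp_line (hp : HasFPowerSeriesAt f p x) (w : E)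
    (n : ℕ) : iteratedDeriv n (fun t : 𝕜 => f (x + t • w)) 0 = n ! • p n (fun _ => w) := by
  set u : 𝕜 →L[𝕜] E := (1 : 𝕜 →L[𝕜] 𝕜).smulRight w
  have hshift : HasFPowerSeriesAt (fun z => f (x + z)) p (u 0) := by
    simpa [add_comm] using hp.comp_sub (-x)
  obtain ⟨r, hr⟩ := hshift.compContinuousLinearMap
  have hline : (fun z => f (x + z)) ∘ u = fun t => f (x + t • w) := by
    funext t
    simp [u]
  rw [hline] at hr
  rw [iteratedDeriv_eq_iteratedFDeriv, ← hr.factorial_smul,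
    FormalMultilinearSeries.compContinuousLinearMap_apply]
  simp [u, Function.comp_def]

theorem HasFPowerSeriesAt.iteratedDeriv_comp_prodMk_left {f : 𝕜 × E → F}
    {p : FormalMultilinearSeries 𝕜 (𝕜 × E) F} {a : 𝕜} {b : E}
    (hp : HasFPowerSeriesAt f p (a, b)) (n : ℕ) :
    iteratedDeriv n (fun s => f (s, b)) a = n ! • p n (fun _ => (1, 0)) := by
  have hshift : (fun s => f (s, b)) = fun s => (fun t => f ((a, b) + t • (1, 0))) (s - a) := by
    funext s
    simp
  rw [hshift, iteratedDeriv_comp_sub_const n (fun t => f ((a, b) + t • (1, 0))) a]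
  simpa using hp.iteratedDeriv_comp_line (1, 0) n

theorem HasFPowerSeriesAt.iteratedDeriv_comp_prodMk_right {f : 𝕜 × E → F}
    {p : FormalMultilinearSeries 𝕜 (𝕜 × E) F} {a : 𝕜} {b : E}
    (hp : HasFPowerSeriesAt f p (a, b)) (v : E) (n : ℕ) :
    iteratedDeriv n (fun t : 𝕜 => f (a, b + t • v)) 0 = n ! • p n (fun _ => (0, v)) := by
  simpa using hp.iteratedDeriv_comp_line (0, v) n

end PowerSeries

section Diagonal

variable {𝕜 V W : Type*} [NontriviallyNormedField 𝕜] [NormedAddCommGroup V] [NormedSpace 𝕜 V]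
  [NormedAddCommGroup W] [NormedSpace 𝕜 W]

theorem continuousMultilinearCurryFin1_apply_diag
    (f : ContinuousMultilinearMap 𝕜 (fun _ : Fin 1 => V) W) (y : V) :
    continuousMultilinearCurryFin1 𝕜 V W f y = f (fun _ => y) := by
  rw [continuousMultilinearCurryFin1_apply]
  congr

noncomputable def ContinuousMultilinearMap.diagQuadraticMap
    (f : ContinuousMultilinearMap 𝕜 (fun _ : Fin 2 => V) W) : QuadraticMap 𝕜 V W :=
  LinearMap.BilinMap.toQuadraticMap
    (((continuousMultilinearCurryFin1 𝕜 V W : _ →L[𝕜] V →L[𝕜] W) ∘L f.curryLeft).toLinearMap₁₂)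

theorem ContinuousMultilinearMap.diagQuadraticMap_apply
    (f : ContinuousMultilinearMap 𝕜 (fun _ : Fin 2 => V) W) (y : V) :
    f.diagQuadraticMap y = f (fun _ => y) := by
  simp only [diagQuadraticMap, LinearMap.BilinMap.toQuadraticMap_apply,
    ContinuousLinearMap.toLinearMap₁₂_apply_apply_apply, ContinuousLinearMap.comp_apply]
  change continuousMultilinearCurryFin1 𝕜 V W (f.curryLeft y) y = _
  rw [continuousMultilinearCurryFin1_apply_diag, ContinuousMultilinearMap.curryLeft_apply]
  exact congrArg f (Fin.cons_self_tail (fun _ => y))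

end Diagonal

section OrderThree

variable {E M : Type*} [AddCommGroup E] [Module ℝ E] [AddCommGroup M] [Module ℝ M]
  {R : E →ₗ[ℝ] E}

theorem LinearMap.eq_zero_of_comp_eq_self (hR : ∀ x, x + R x + R (R x) = 0) {ℓ : E →ₗ[ℝ] M}
    (hℓ : ℓ ∘ₗ R = ℓ) : ℓ = 0 := by
  have hinv (x : E) : ℓ (R x) = ℓ x := LinearMap.congr_fun hℓ x
  ext x
  have h3 : (3 : ℝ) • ℓ x = 0 := by
    rw [← map_zero ℓ, ← hR x, map_add, map_add, hinv, hinv, hinv]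
    module
  simpa using h3

theorem QuadraticMap.apply_smul_add_smul_of_comp_eq_self (hR : ∀ x, x + R x + R (R x) = 0)
    {q : QuadraticMap ℝ E M} (hq : q.comp R = q) (a b : ℝ) (x : E) :
    q (a • x + b • R x) = (a ^ 2 - a * b + b ^ 2) • q x := by
  have hinv (x : E) : q (R x) = q x := by rw [← q.comp_apply, hq]
  have hpolar : polar q x (R x) = -q x := by
    have hsum : x + R x = -R (R x) := eq_neg_of_add_eq_zero_left (hR x)
    rw [polar, hsum, QuadraticMap.map_neg, hinv, hinv]
    abel
  rw [QuadraticMap.map_add q, QuadraticMap.map_smul, QuadraticMap.map_smul, polar_smul_left,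
    polar_smul_right, hpolar, hinv]
  module

theorem QuadraticMap.eq_zero_of_comp_eq_self (hR : ∀ x, x + R x + R (R x) = 0)
    {q : QuadraticMap ℝ E M} (hq : q.comp R = q) {x₀ : E}
    (hspan : ∀ x, ∃ a b : ℝ, x = a • x₀ + b • R x₀) (hx₀ : q x₀ = 0) : q = 0 := by
  ext x
  obtain ⟨a, b, rfl⟩ := hspan x
  simp [q.apply_smul_add_smul_of_comp_eq_self hR hq, hx₀]

theorem LinearMap.apply_prod_of_comp_prodMap_eq_self (hR : ∀ x, x + R x + R (R x) = 0)
    {ℓ : ℝ × E →ₗ[ℝ] M} (hℓ : ℓ ∘ₗ LinearMap.id.prodMap R = ℓ) (t : ℝ) (x : E) :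
    ℓ (t, x) = t • ℓ (1, 0) := by
  have hinr : ℓ ∘ₗ LinearMap.inr ℝ ℝ E = 0 := by
    refine LinearMap.eq_zero_of_comp_eq_self hR (LinearMap.ext fun y => ?_)
    simpa using LinearMap.congr_fun hℓ (0, y)
  have hx : ℓ (0, x) = 0 := LinearMap.congr_fun hinr x
  rw [show ((t, x) : ℝ × E) = t • (1, 0) + (0, x) by simp, map_add, map_smul, hx, add_zero]

theorem QuadraticMap.apply_prod_of_comp_prodMap_eq_self (hR : ∀ x, x + R x + R (R x) = 0)
    {Q : QuadraticMap ℝ (ℝ × E) M} (hQ : Q.comp (LinearMap.id.prodMap R) = Q) (t : ℝ) (x : E) :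
    Q (t, x) = (t * t) • Q (1, 0) + Q (0, x) := by
  have hcross : polarBilin Q (1, 0) ∘ₗ LinearMap.inr ℝ ℝ E = 0 := by
    refine LinearMap.eq_zero_of_comp_eq_self hR (LinearMap.ext fun y => ?_)
    have h := congrArg (fun Q' : QuadraticMap ℝ (ℝ × E) M => polar Q' (1, 0) (0, y)) hQ
    simpa [polar] using h
  have hx : polar Q (1, 0) (0, x) = 0 := LinearMap.congr_fun hcross x
  rw [show ((t, x) : ℝ × E) = t • (1, 0) + (0, x) by simp, QuadraticMap.map_add Q,
    QuadraticMap.map_smul, polar_smul_left, hx, smul_zero, add_zero]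

end OrderThree

noncomputable def rotCLM : EuclideanSpace ℝ (Fin 2) →L[ℝ] EuclideanSpace ℝ (Fin 2) :=
  LinearMap.toContinuousLinearMap
    { toFun := rot
      map_add' := fun x y => by ext i; fin_cases i <;> simp [rot] <;> ring
      map_smul' := fun c x => by ext i; fin_cases i <;> simp [rot] <;> ring }

theorem add_rot_add_rot_rot (x : EuclideanSpace ℝ (Fin 2)) : x + rot x + rot (rot x) = 0 := by
  have h3 : Real.sqrt 3 ^ 2 = 3 := Real.sq_sqrt (by norm_num)
  ext i; fin_cases i <;> simp [rot] <;> ring_nf <;> simp [h3] <;> ring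

theorem exists_eq_smul_e₁_add_smul_rot (x : EuclideanSpace ℝ (Fin 2)) :
    ∃ a b : ℝ, x = a • e₁ 1 + b • rot (e₁ 1) := by
  have h3 : Real.sqrt 3 ≠ 0 := by positivity
  refine ⟨x 0 + x 1 / Real.sqrt 3, 2 * x 1 / Real.sqrt 3, ?_⟩
  ext i
  fin_cases i <;> simp [rot, e₁] <;> field_simp
  ring

theorem e₁_eq_smul (t : ℝ) : e₁ t = t • e₁ 1 := by
  ext i; fin_cases i <;> simp [e₁]

theorem HasFPowerSeriesAt.partialSum_three_eq_of_rot_invariant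
    {F : ℝ × EuclideanSpace ℝ (Fin 2) → ℝ}
    {p : FormalMultilinearSeries ℝ (ℝ × EuclideanSpace ℝ (Fin 2)) ℝ} {lam₀ : ℝ}
    (hp : HasFPowerSeriesAt F p (lam₀, 0))
    (hinv : ∀ᶠ z in 𝓝 (lam₀, 0), F (z.1, rot z.2) = F z) (hzero : F (lam₀, 0) = 0)
    (h₁ : p 1 (fun _ => (1, 0)) = 0) (h₂ : p 2 (fun _ => (0, e₁ 1)) = 0)
    (y : ℝ × EuclideanSpace ℝ (Fin 2)) :
    p.partialSum 3 y = p 2 (fun _ => (1, 0)) * y.1 ^ 2 := by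
  set P := (ContinuousLinearMap.id ℝ ℝ).prodMap rotCLM
  have hP : P (lam₀, 0) = (lam₀, 0) := by simp [P]
  have hFP : F ∘ P =ᶠ[𝓝 (lam₀, 0)] F := hinv
  set R : EuclideanSpace ℝ (Fin 2) →ₗ[ℝ] EuclideanSpace ℝ (Fin 2) := rotCLM.toLinearMap
  have hR (x : EuclideanSpace ℝ (Fin 2)) : x + R x + R (R x) = 0 := add_rot_add_rot_rot x
  have hPR (z : ℝ × EuclideanSpace ℝ (Fin 2)) : P z = LinearMap.id.prodMap R z := rfl
  set ℓ : ℝ × EuclideanSpace ℝ (Fin 2) →ₗ[ℝ] ℝ :=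
    (continuousMultilinearCurryFin1 ℝ (ℝ × EuclideanSpace ℝ (Fin 2)) ℝ (p 1)).toLinearMap
  have hℓ : ℓ ∘ₗ LinearMap.id.prodMap R = ℓ := LinearMap.ext fun z => by
    simpa only [ℓ, LinearMap.comp_apply, ContinuousLinearMap.coe_coe,
      continuousMultilinearCurryFin1_apply_diag, hPR] using hp.apply_diag_map_eq hP hFP 1 z
  set Q := (p 2).diagQuadraticMap
  have hQ : Q.comp (LinearMap.id.prodMap R) = Q := QuadraticMap.ext fun z => by
    simpa only [Q, QuadraticMap.comp_apply, ContinuousMultilinearMap.diagQuadraticMap_apply,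
      hPR] using hp.apply_diag_map_eq hP hFP 2 z
  have hQκ : Q.comp (LinearMap.inr ℝ ℝ _) = 0 := by
    refine QuadraticMap.eq_zero_of_comp_eq_self hR (QuadraticMap.ext fun x => ?_)
      exists_eq_smul_e₁_add_smul_rot ?_
    · simpa using DFunLike.congr_fun hQ (0, x)
    · simpa [Q, ContinuousMultilinearMap.diagQuadraticMap_apply] using h₂
  obtain ⟨t, κ⟩ := y
  have hlin := LinearMap.apply_prod_of_comp_prodMap_eq_self hR hℓ t κ
  have hquad := QuadraticMap.apply_prod_of_comp_prodMap_eq_self hR hQ t κ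
  have hκ := DFunLike.congr_fun hQκ κ
  simp only [ℓ, Q, ContinuousLinearMap.coe_coe, continuousMultilinearCurryFin1_apply_diag,
    ContinuousMultilinearMap.diagQuadraticMap_apply, QuadraticMap.comp_apply, LinearMap.inr_apply,
    zero_apply] at hlin hquad hκ
  simp only [FormalMultilinearSeries.partialSum, Finset.sum_range_succ, Finset.range_one,
    Finset.sum_singleton, hp.coeff_zero, hzero, hlin, h₁, hquad, hκ, smul_eq_mul]
  ring

theorem exists_abs_le_rpow_of_mul_sq_le {a C : ℝ} (ha : 0 < a) (hC : 0 < C) :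
    ∃ δ > 0, ∀ t n : ℝ, 0 < n → |t| < δ → n < δ → a * t ^ 2 ≤ C * max |t| n ^ 3 →
      |t| ≤ n ^ ((1 : ℝ) + 1 / 4) := by
  refine ⟨min (a / C) ((a / C) ^ 2), by positivity, fun t n hn ht hnδ h => ?_⟩
  have htC : C * |t| < a := by
    have := ht.trans_le (min_le_left _ _)
    rwa [lt_div_iff₀ hC, mul_comm] at this
  have hnC : C ^ 2 * n ≤ a ^ 2 := by
    have := (hnδ.trans_le (min_le_right _ _)).le
    rwa [div_pow, le_div_iff₀ (by positivity), mul_comm] at this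
  have htn : |t| ≤ n := by
    by_contra! hnt
    rw [max_eq_left hnt.le, ← sq_abs t] at h
    have ht2 : 0 < |t| ^ 2 := pow_pos (hn.trans hnt) 2
    nlinarith
  rw [max_eq_right htn] at h
  have h4 : |t| ^ 4 ≤ n ^ 5 := by
    have hsq : (a * |t| ^ 2) ^ 2 ≤ (C * n ^ 3) ^ 2 := by
      rw [sq_abs]
      exact pow_le_pow_left₀ (by positivity) h 2
    have : a ^ 2 * |t| ^ 4 ≤ a ^ 2 * n ^ 5 := by
      calc a ^ 2 * |t| ^ 4 = (a * |t| ^ 2) ^ 2 := by ring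
        _ ≤ (C * n ^ 3) ^ 2 := hsq
        _ = (C ^ 2 * n) * n ^ 5 := by ring
        _ ≤ a ^ 2 * n ^ 5 := by gcongr
    exact le_of_mul_le_mul_left this (by positivity)
  calc |t| = (|t| ^ 4) ^ ((4 : ℕ) : ℝ)⁻¹ :=
        (Real.pow_rpow_inv_natCast (abs_nonneg t) (by norm_num)).symm
    _ ≤ (n ^ 5) ^ ((4 : ℕ) : ℝ)⁻¹ := by gcongr
    _ = n ^ ((1 : ℝ) + 1 / 4) := by
      rw [← Real.rpow_natCast, ← Real.rpow_mul hn.le]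
      norm_num

/-- Degenerate-cone case of the dispersion relation near a doubly degenerate
eigenvalue: when the cone coefficient vanishes, the dispersion relation lies in
the region `|λ − λ₀| ≤ ‖κ‖^{1+ε}`, hence is locally flat. -/
theorem stmt9 (F : ℝ × EuclideanSpace ℝ (Fin 2) → ℝ) (lam₀ : ℝ)
    (hF : AnalyticAt ℝ F (lam₀, (0 : EuclideanSpace ℝ (Fin 2))))
    (hinv : ∀ᶠ p in nhds ((lam₀, (0 : EuclideanSpace ℝ (Fin 2)))),
      F (p.1, rot p.2) = F p)
    (hzero : F (lam₀, 0) = 0)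
    (hderiv : deriv (fun l => F (l, (0 : EuclideanSpace ℝ (Fin 2)))) lam₀ = 0)
    (hlam2 : iteratedDeriv 2 (fun l => F (l, (0 : EuclideanSpace ℝ (Fin 2)))) lam₀ ≠ 0)
    (hkap2 : iteratedDeriv 2 (fun t => F (lam₀, e₁ t)) 0 = 0) :
    ∃ δ > 0, ∃ ε > 0, ∀ (l : ℝ) (κ : EuclideanSpace ℝ (Fin 2)),
      F (l, κ) = 0 → |l - lam₀| < δ → 0 < ‖κ‖ → ‖κ‖ < δ →
      |l - lam₀| ≤ ‖κ‖ ^ ((1 : ℝ) + ε) := by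
  obtain ⟨p, hp⟩ := hF
  have h₁ : p 1 (fun _ => (1, 0)) = 0 := by
    simpa [← iteratedDeriv_one, hp.iteratedDeriv_comp_prodMk_left] using hderiv
  have hA : p 2 (fun _ => (1, 0)) ≠ 0 := by
    simpa [hp.iteratedDeriv_comp_prodMk_left] using hlam2
  have h₂ : p 2 (fun _ => (0, e₁ 1)) = 0 := by
    have hline : (fun t => F (lam₀, e₁ t)) = fun t => F (lam₀, 0 + t • e₁ 1) := by
      funext t
      rw [zero_add, ← e₁_eq_smul]
    rw [hline, hp.iteratedDeriv_comp_prodMk_right] at hkap2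
    simpa using hkap2
  have hjet := hp.partialSum_three_eq_of_rot_invariant hinv hzero h₁ h₂
  obtain ⟨C, hC, r, hr, htaylor⟩ := hp.exists_norm_sub_partialSum_le 3
  obtain ⟨δ, hδ, hflat⟩ := exists_abs_le_rpow_of_mul_sq_le (abs_pos.mpr hA) hC
  refine ⟨min r δ, by positivity, 1 / 4, by norm_num, fun l κ hl hlδ hκ hκδ => ?_⟩
  refine hflat _ _ hκ (hlδ.trans_le (min_le_right _ _)) (hκδ.trans_le (min_le_right _ _)) ?_
  have hnorm : ‖((l - lam₀, κ) : ℝ × EuclideanSpace ℝ (Fin 2))‖ = max |l - lam₀| ‖κ‖ := rfl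
  have h := htaylor (l - lam₀, κ) <| by
    rw [hnorm]
    exact max_lt (hlδ.trans_le (min_le_left _ _)) (hκδ.trans_le (min_le_left _ _))
  rw [show ((lam₀, 0) + (l - lam₀, κ) : ℝ × EuclideanSpace ℝ (Fin 2)) = (l, κ) by simp, hl, hjet,
    hnorm] at h
  simpa [abs_mul] using h
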